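/- arXiv:2109.03267 — 3 statements merged into one kernel-verified Lean document; each statement's English description precedes it below -/
import Mathlib

section
/- There exist matrices A, S, B ∈ M_3(ℂ) with A upper triangular, Tr(A) a nonnegative real number, S Hermitian diagonal with real entries satisfying Re(A) ≤ S, and B strictly upper triangular with ‖B‖ ≤ 1, such that for every real r with √2 − 1 < r < 1 one has Tr(A) + ∑_{m=1}^∞ |Tr(A B*)| r^m > Tr(S). (Explicit witnesses: A with rows (2, −2√2, −2), (0, 2, −2√2), (0, 0, 2); S = diag(3, 4, 3); B with a single 1 in positions (1,2) and (2,3); then |Tr(A B*)| = 4√2, Tr(A) = 6, Tr(S) = 10.) -/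
open Matrix
open scoped Matrix.Norms.L2Operator ComplexOrder

/-!
With `B` the nilpotent shift, `Tr(A Bᴴ) = a₁₂ + a₂₃ = -4√2`, so for `0 ≤ r < 1` the Bohr sum equals
`6 + 4√2 r / (1 - r)`, which exceeds `Tr S = 10` exactly when `√2 r > 1 - r`, i.e. `r > √2 - 1`.
The constraint `Re A ≤ S` holds because `S - Re A = v vᴴ` with `v = (1, √2, 1)`, and `‖B‖ ≤ 1`
because `Bᴴ B = diag(0, 1, 1)` and `‖B‖² = ‖Bᴴ B‖`.
-/

theorem Matrix.l2_opNorm_le_one_of_conjTranspose_mul_self_eq_diagonal {𝕜 m n : Type*}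
    [RCLike 𝕜] [Fintype m] [Fintype n] [DecidableEq n] {M : Matrix m n 𝕜} {d : n → 𝕜} (hM : Mᴴ * M = diagonal d)
    (hd : ∀ i, ‖d i‖ ≤ 1) : ‖M‖ ≤ 1 := by
  have h : ‖M‖ * ‖M‖ ≤ 1 := by
    rw [← l2_opNorm_conjTranspose_mul_self, hM, l2_opNorm_diagonal]
    exact (pi_norm_le_iff_of_nonneg zero_le_one).2 hd
  nlinarith [norm_nonneg M]

theorem tsum_mul_pow_succ {c r : ℝ} (hr₀ : 0 ≤ r) (hr₁ : r < 1) :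
    ∑' m : ℕ, c * r ^ (m + 1) = c * r / (1 - r) := by
  simp_rw [pow_succ', ← mul_assoc]
  rw [tsum_mul_left, tsum_geometric_of_lt_one hr₀ hr₁, div_eq_mul_inv]

theorem one_lt_sqrt_two_mul_div_one_sub {r : ℝ} (hr : √2 - 1 < r) (hr₁ : r < 1) :
    1 < √2 * r / (1 - r) := by
  have h2 : √2 * √2 = 2 := Real.mul_self_sqrt zero_le_two
  rw [one_lt_div (by linarith)]
  nlinarith [Real.sqrt_nonneg 2]

namespace BohrExample

lemma ofReal_sqrt_two_mul_self : (√2 : ℂ) * √2 = 2 := by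
  norm_cast
  exact Real.mul_self_sqrt zero_le_two

noncomputable def A : Matrix (Fin 3) (Fin 3) ℂ :=
  !![2, -2 * √2, -2; 0, 2, -2 * √2; 0, 0, 2]

def S : Matrix (Fin 3) (Fin 3) ℂ := diagonal ![3, 4, 3]

def B : Matrix (Fin 3) (Fin 3) ℂ := !![0, 1, 0; 0, 0, 1; 0, 0, 0]

noncomputable def v : Fin 3 → ℂ := ![1, √2, 1]

lemma blockTriangular_A : A.BlockTriangular id := by
  intro i j h
  fin_cases i <;> fin_cases j <;> first | rfl | exact absurd h (by decide)

lemma trace_A : A.trace = 6 := by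
  simp [trace_fin_three, A]
  norm_num

lemma trace_S : S.trace = 10 := by
  simp [S, Fin.sum_univ_three]
  norm_num

lemma trace_A_mul_conjTranspose_B : (A * Bᴴ).trace = -(4 * √2) := by
  simp only [trace_fin_three, A, B, mul_apply, Fin.sum_univ_three, conjTranspose_apply]
  simp
  ring

lemma norm_trace_A_mul_conjTranspose_B : ‖(A * Bᴴ).trace‖ = 4 * √2 := by
  rw [trace_A_mul_conjTranspose_B, norm_neg, norm_mul, Complex.norm_real,
    Real.norm_of_nonneg (Real.sqrt_nonneg 2)]
  norm_num

lemma B_apply_eq_zero_of_le {i j : Fin 3} (h : j ≤ i) : B i j = 0 := by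
  fin_cases i <;> fin_cases j <;> first | rfl | exact absurd h (by decide)

lemma isHermitian_S : S.IsHermitian :=
  isHermitian_diagonal_iff.2 fun i => by fin_cases i <;> simp

lemma S_sub_re_A : S - (2 : ℂ)⁻¹ • (A + Aᴴ) = vecMulVec v (star v) := by
  ext i j
  fin_cases i <;> fin_cases j <;>
    simp [A, S, v, vecMulVec, ofReal_sqrt_two_mul_self] <;> ring

lemma conjTranspose_B_mul_B : Bᴴ * B = diagonal ![0, 1, 1] := by
  ext i j
  fin_cases i <;> fin_cases j <;> simp [B, mul_apply, Fin.sum_univ_three]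

lemma norm_B_le_one : ‖B‖ ≤ 1 := by
  refine l2_opNorm_le_one_of_conjTranspose_mul_self_eq_diagonal conjTranspose_B_mul_B fun i => ?_
  fin_cases i <;> simp

end BohrExample

open BohrExample in
/-- `√2 - 1` is optimal in Bohr's inequality for 3×3 upper triangular matrices. -/
theorem bohr_matrix_optimality_three_by_three :
    ∃ A S B : Matrix (Fin 3) (Fin 3) ℂ,
      (∀ i j : Fin 3, j < i → A i j = 0) ∧
      0 ≤ A.trace ∧
      S.IsHermitian ∧
      (∀ i j : Fin 3, i ≠ j → S i j = 0) ∧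
      (∀ i : Fin 3, (S i i).im = 0) ∧
      (S - (2 : ℂ)⁻¹ • (A + Aᴴ)).PosSemidef ∧
      (∀ i j : Fin 3, j ≤ i → B i j = 0) ∧
      ‖B‖ ≤ 1 ∧
      ∀ r : ℝ, Real.sqrt 2 - 1 < r → r < 1 →
        A.trace.re + ∑' m : ℕ, ‖(A * Bᴴ).trace‖ * r ^ (m + 1) >
          S.trace.re := by
  refine ⟨A, S, B, blockTriangular_A, by simp [trace_A], isHermitian_S,
    fun i j h => diagonal_apply_ne _ h, fun i => by fin_cases i <;> simp [S],
    S_sub_re_A ▸ posSemidef_vecMulVec_self_star v, fun _ _ => B_apply_eq_zero_of_le,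
    norm_B_le_one, fun r hr hr₁ => ?_⟩
  have hr₀ : 0 ≤ r := by linarith [Real.one_lt_sqrt_two]
  rw [norm_trace_A_mul_conjTranspose_B, tsum_mul_pow_succ hr₀ hr₁, trace_A, trace_S,
    mul_assoc, mul_div_assoc]
  norm_num
  linarith [one_lt_sqrt_two_mul_div_one_sub hr hr₁]
end

section
/- Let n ≥ 1 and let A ∈ M_n(ℂ) with Tr(A) a nonnegative real number and Re(A) ≤ S for some Hermitian S ∈ M_n(ℂ). Let (A_m)_{m≥1} be a sequence in M_n(ℂ) such that Tr(S A_m) = 0, Tr(A A_m) = 0, and ‖A_m‖ ≤ 1 for every m ≥ 1. Set α_0 = Tr(A) and α_m = Tr(A A_m*) for m ≥ 1. Then for every real r with 0 ≤ r ≤ 1/3, the series ∑_{m=0}^∞ |α_m| r^m converges and ∑_{m=0}^∞ |α_m| r^m ≤ Tr(S). -/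
open Matrix
open scoped Matrix.Norms.L2Operator ComplexOrder

/-!
`T := S - Re A` is positive semidefinite, and a positive semidefinite `T` satisfies
`|Tr (T X)| ≤ ‖X‖ Tr T` (write `T` as a sum of rank-one matrices `v v*`). The orthogonality
conditions give `Tr (T B*) = -Tr (A B*) / 2`, hence `|α m| ≤ 2 Tr (S - A)` for `m ≥ 1`.
For `r ≤ 1/3` the geometric tail `∑_{m ≥ 1} r^m = r / (1 - r)` is at most `1/2`, so
`∑ |α m| r^m ≤ Tr A + Tr (S - A) = Tr S`.
-/

namespace Matrix

variable {𝕜 n : Type*} [RCLike 𝕜] [Fintype n] [DecidableEq n]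

theorem norm_star_dotProduct_mulVec_le (X : Matrix n n 𝕜) (v : n → 𝕜) :
    ‖star v ⬝ᵥ X *ᵥ v‖ ≤ ‖X‖ * RCLike.re (star v ⬝ᵥ v) := by
  set x : EuclideanSpace 𝕜 n := WithLp.toLp 2 v
  have hnorm : RCLike.re (star v ⬝ᵥ v) = ‖x‖ ^ 2 := by
    rw [dotProduct_comm, ← EuclideanSpace.inner_toLp_toLp, ← norm_sq_eq_re_inner (𝕜 := 𝕜)]
  calc ‖star v ⬝ᵥ X *ᵥ v‖ = ‖inner 𝕜 x (WithLp.toLp 2 (X *ᵥ v))‖ := by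
        rw [EuclideanSpace.inner_toLp_toLp, dotProduct_comm]
    _ ≤ ‖x‖ * (‖X‖ * ‖x‖) := (norm_inner_le_norm _ _).trans <|
        mul_le_mul_of_nonneg_left (X.l2_opNorm_mulVec x) (norm_nonneg _)
    _ = ‖X‖ * RCLike.re (star v ⬝ᵥ v) := by rw [hnorm]; ring

theorem PosSemidef.norm_trace_mul_le {T : Matrix n n 𝕜} (hT : T.PosSemidef) (X : Matrix n n 𝕜) :
    ‖(T * X).trace‖ ≤ ‖X‖ * RCLike.re T.trace := by
  obtain ⟨m, v, rfl⟩ := posSemidef_iff_eq_sum_vecMulVec.mp hT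
  have hterm : ∀ u : n → 𝕜, (vecMulVec u (star u) * X).trace = star u ⬝ᵥ X *ᵥ u := by
    intro u
    rw [vecMulVec_mul, trace_vecMulVec, dotProduct_comm, ← dotProduct_mulVec]
  calc ‖((∑ i, vecMulVec (v i) (star (v i))) * X).trace‖
      ≤ ∑ i, ‖star (v i) ⬝ᵥ X *ᵥ v i‖ := by
        simpa only [Finset.sum_mul, trace_sum, hterm] using norm_sum_le _ _
    _ ≤ ∑ i, ‖X‖ * RCLike.re (star (v i) ⬝ᵥ v i) :=
        Finset.sum_le_sum fun i _ => norm_star_dotProduct_mulVec_le X (v i)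
    _ = ‖X‖ * RCLike.re (∑ i, vecMulVec (v i) (star (v i))).trace := by
        simp only [trace_sum, trace_vecMulVec, map_sum, Finset.mul_sum, dotProduct_comm (v _)]

theorem norm_trace_mul_conjTranspose_le {A S B : Matrix n n 𝕜} (hS : S.IsHermitian)
    (hAS : (S - (2 : 𝕜)⁻¹ • (A + Aᴴ)).PosSemidef) (hSB : (S * B).trace = 0)
    (hAB : (A * B).trace = 0) (hB : ‖B‖ ≤ 1) :
    ‖(A * Bᴴ).trace‖ ≤ 2 * (RCLike.re S.trace - RCLike.re A.trace) := by
  have hSB' : (S * Bᴴ).trace = 0 := by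
    rw [← hS.eq, ← conjTranspose_mul, trace_conjTranspose, trace_mul_comm, hSB, star_zero]
  have hAB' : (Aᴴ * Bᴴ).trace = 0 := by
    rw [← conjTranspose_mul, trace_conjTranspose, trace_mul_comm, hAB, star_zero]
  have htrace_mul : ((S - (2 : 𝕜)⁻¹ • (A + Aᴴ)) * Bᴴ).trace = -(2 : 𝕜)⁻¹ * (A * Bᴴ).trace := by
    rw [sub_mul, trace_sub, hSB', smul_mul, trace_smul, add_mul, trace_add, hAB', smul_eq_mul]
    ring
  have hre_trace : RCLike.re (S - (2 : 𝕜)⁻¹ • (A + Aᴴ)).trace =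
      RCLike.re S.trace - RCLike.re A.trace := by
    rw [trace_sub, trace_smul, trace_add, trace_conjTranspose, smul_eq_mul, RCLike.star_def,
      RCLike.add_conj, inv_mul_cancel_left₀ two_ne_zero, map_sub, RCLike.ofReal_re]
  have hre_nonneg := (RCLike.nonneg_iff.mp hAS.trace_nonneg).1
  have h := hAS.norm_trace_mul_le Bᴴ
  rw [htrace_mul, hre_trace, l2_opNorm_conjTranspose, norm_mul, norm_neg, norm_inv,
    RCLike.norm_two] at h
  rw [hre_trace] at hre_nonneg
  linarith [mul_le_of_le_one_left hre_nonneg hB]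

end Matrix

theorem summable_and_tsum_mul_pow_le {a : ℕ → ℝ} {c r : ℝ} (ha : ∀ m, 0 ≤ a m)
    (hac : ∀ m, 1 ≤ m → a m ≤ 2 * c) (hr0 : 0 ≤ r) (hr1 : r ≤ 1 / 3) :
    Summable (fun m => a m * r ^ m) ∧ ∑' m, a m * r ^ m ≤ a 0 + c := by
  have hr : r < 1 := by linarith
  have hgeom : Summable (fun m : ℕ => 2 * c * r * r ^ m) :=
    (summable_geometric_of_lt_one hr0 hr).mul_left _
  have htail_le : ∀ m : ℕ, a (m + 1) * r ^ (m + 1) ≤ 2 * c * r * r ^ m := fun m =>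
    calc a (m + 1) * r ^ (m + 1) ≤ 2 * c * r ^ (m + 1) :=
          mul_le_mul_of_nonneg_right (hac (m + 1) m.succ_pos) (pow_nonneg hr0 _)
      _ = 2 * c * r * r ^ m := by ring
  have htail : Summable (fun m : ℕ => a (m + 1) * r ^ (m + 1)) :=
    hgeom.of_nonneg_of_le (fun m => by have := ha (m + 1); positivity) htail_le
  have hsum : Summable (fun m => a m * r ^ m) := (summable_nat_add_iff 1).mp htail
  refine ⟨hsum, ?_⟩
  have htsum_tail : ∑' m : ℕ, a (m + 1) * r ^ (m + 1) ≤ 2 * c * r * (1 - r)⁻¹ := by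
    rw [← tsum_geometric_of_lt_one hr0 hr, ← tsum_mul_left]
    exact htail.tsum_le_tsum htail_le hgeom
  have hc : 0 ≤ c := by linarith [ha 1, hac 1 le_rfl]
  have hradius : 2 * c * r * (1 - r)⁻¹ ≤ c := by
    rw [← div_eq_mul_inv, div_le_iff₀ (by linarith)]
    linarith [mul_le_mul_of_nonneg_left hr1 hc]
  rw [hsum.tsum_eq_zero_add, pow_zero, mul_one]
  linarith

theorem bohr_matrix_trace_orthogonal_general {n : ℕ}
    (A S : Matrix (Fin n) (Fin n) ℂ)
    (hA_tr : 0 ≤ A.trace)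
    (hS_herm : S.IsHermitian)
    (hAS : (S - (2 : ℂ)⁻¹ • (A + Aᴴ)).PosSemidef)
    (B : ℕ → Matrix (Fin n) (Fin n) ℂ)
    (hSB : ∀ m : ℕ, 1 ≤ m → (S * B m).trace = 0)
    (hAB : ∀ m : ℕ, 1 ≤ m → (A * B m).trace = 0)
    (hB_norm : ∀ m : ℕ, 1 ≤ m → ‖B m‖ ≤ 1)
    (α : ℕ → ℂ)
    (hα0 : α 0 = A.trace)
    (hα : ∀ m : ℕ, 1 ≤ m → α m = (A * (B m)ᴴ).trace)
    (r : ℝ) (hr0 : 0 ≤ r) (hr1 : r ≤ 1 / 3) :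
    Summable (fun m : ℕ => ‖α m‖ * r ^ m) ∧
      ∑' m : ℕ, ‖α m‖ * r ^ m ≤ S.trace.re := by
  have hα0_norm : ‖α 0‖ = A.trace.re := by
    rw [hα0, ← Complex.ofReal_re ‖_‖, Complex.norm_of_nonneg' hA_tr]
  have hα_le : ∀ m, 1 ≤ m → ‖α m‖ ≤ 2 * (S.trace.re - A.trace.re) := fun m hm =>
    hα m hm ▸ norm_trace_mul_conjTranspose_le hS_herm hAS (hSB m hm) (hAB m hm) (hB_norm m hm)
  obtain ⟨hsum, hle⟩ := summable_and_tsum_mul_pow_le (fun m => norm_nonneg (α m)) hα_le hr0 hr1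
  exact ⟨hsum, by linarith⟩

/-- **Generalized Bohr's inequality for matrices** with trace-orthogonality
conditions in place of triangularity (radius `1/3`). -/
theorem bohr_matrix_trace_orthogonal {n : ℕ} (hn : 1 ≤ n)
    (A S : Matrix (Fin n) (Fin n) ℂ)
    (hA_tr : 0 ≤ A.trace)
    (hS_herm : S.IsHermitian)
    (hAS : (S - (2 : ℂ)⁻¹ • (A + Aᴴ)).PosSemidef)
    (B : ℕ → Matrix (Fin n) (Fin n) ℂ)
    (hSB : ∀ m : ℕ, 1 ≤ m → (S * B m).trace = 0)
    (hAB : ∀ m : ℕ, 1 ≤ m → (A * B m).trace = 0)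
    (hB_norm : ∀ m : ℕ, 1 ≤ m → ‖B m‖ ≤ 1)
    (α : ℕ → ℂ)
    (hα0 : α 0 = A.trace)
    (hα : ∀ m : ℕ, 1 ≤ m → α m = (A * (B m)ᴴ).trace)
    (r : ℝ) (hr0 : 0 ≤ r) (hr1 : r ≤ 1 / 3) :
    Summable (fun m : ℕ => ‖α m‖ * r ^ m) ∧
      ∑' m : ℕ, ‖α m‖ * r ^ m ≤ S.trace.re :=
  bohr_matrix_trace_orthogonal_general A S hA_tr hS_herm hAS B hSB hAB hB_norm α hα0 hα r hr0 hr1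
end

section
/- Let A ∈ M_2(ℂ) be upper triangular, let S ∈ M_2(ℂ) be Hermitian and upper triangular (hence diagonal with real entries) with Re(A) ≤ S, and let B ∈ M_2(ℂ) be strictly upper triangular with ‖B‖ ≤ 1. Then |Tr(A B*)| ≤ Tr(S) − Re(Tr(A)). -/
/-!
Put `P = S - Re A`, which is positive semidefinite. For triangular `A` and strictly upper
triangular `B`, `Tr (A Bᴴ) = a₁₂ · conj b₁₂`, and `|b₁₂| ≤ ‖B‖ ≤ 1`. Since `A` and `S` vanish below
the diagonal, `P₂₁ = -conj a₁₂ / 2`. A principal `2 × 2` minor of `P` is nonnegative, so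
`|P₂₁|² ≤ P₁₁ P₂₂`, and by AM–GM `|a₁₂| = 2 |P₂₁| ≤ Tr P = Tr S - Re Tr A`.
-/

open Matrix
open scoped Matrix.Norms.L2Operator ComplexOrder

namespace Matrix

section PosSemidef

variable {n 𝕜 : Type*} [RCLike 𝕜] {M : Matrix n n 𝕜}

theorem PosSemidef.norm_sq_apply_le (hM : M.PosSemidef) (i j : n) :
    ‖M i j‖ ^ 2 ≤ RCLike.re (M i i) * RCLike.re (M j j) := by
  have hdet := (hM.submatrix ![i, j]).det_nonneg
  have hji : M j i = star (M i j) := (hM.isHermitian.apply j i).symm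
  have hdiag : ∀ k, M k k = (RCLike.re (M k k) : 𝕜) := fun k =>
    (RCLike.conj_eq_iff_re.mp (hM.isHermitian.apply k k)).symm
  rw [det_fin_two] at hdet
  simp only [submatrix_apply, cons_val_zero, cons_val_one] at hdet
  rw [hji, RCLike.star_def, RCLike.mul_conj, hdiag i, hdiag j] at hdet
  exact_mod_cast sub_nonneg.mp hdet

theorem PosSemidef.two_mul_norm_apply_le (hM : M.PosSemidef) (i j : n) :
    2 * ‖M i j‖ ≤ RCLike.re (M i i) + RCLike.re (M j j) := by
  have hi : 0 ≤ RCLike.re (M i i) := RCLike.nonneg_iff.mp hM.diag_nonneg |>.1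
  have hj : 0 ≤ RCLike.re (M j j) := RCLike.nonneg_iff.mp hM.diag_nonneg |>.1
  nlinarith [hM.norm_sq_apply_le i j, sq_nonneg (RCLike.re (M i i) - RCLike.re (M j j)),
    norm_nonneg (M i j)]

end PosSemidef

theorem norm_apply_le_l2_opNorm {m n 𝕜 : Type*} [Fintype m] [Fintype n] [DecidableEq n]
    [RCLike 𝕜] (B : Matrix m n 𝕜) (i : m) (j : n) : ‖B i j‖ ≤ ‖B‖ := by
  set v := (EuclideanSpace.equiv m 𝕜).symm (B *ᵥ EuclideanSpace.single j 1)
  calc ‖B i j‖ = ‖v i‖ := by simp [v]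
    _ ≤ ‖v‖ := PiLp.norm_apply_le v i
    _ ≤ ‖B‖ := by simpa [v] using B.l2_opNorm_mulVec (EuclideanSpace.single j 1)

end Matrix

theorem bohr_coefficient_estimate_two_by_two_general
    (A S B : Matrix (Fin 2) (Fin 2) ℂ)
    (hA_ut : ∀ i j : Fin 2, j < i → A i j = 0)
    (hS_ut : ∀ i j : Fin 2, j < i → S i j = 0)
    (hAS : (S - (2 : ℂ)⁻¹ • (A + Aᴴ)).PosSemidef)
    (hB_sut : ∀ i j : Fin 2, j ≤ i → B i j = 0)
    (hB_norm : ‖B‖ ≤ 1) :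
    ‖(A * Bᴴ).trace‖ ≤ S.trace.re - A.trace.re := by
  set P := S - (2 : ℂ)⁻¹ • (A + Aᴴ)
  have hA10 : A 1 0 = 0 := hA_ut 1 0 Fin.zero_lt_one
  have hP10 : P 1 0 = -(2⁻¹ * star (A 0 1)) := by
    simp [P, hS_ut 1 0 Fin.zero_lt_one, hA10]
  have hP_trace : P.trace.re = S.trace.re - A.trace.re := by
    simp [P, trace_conjTranspose, Complex.inv_re, ← two_mul]
  have hAB : (A * Bᴴ).trace = A 0 1 * star (B 0 1) := by
    simp [trace_fin_two, mul_apply, Fin.sum_univ_two, hA10, hB_sut 0 0 le_rfl,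
      hB_sut 1 1 le_rfl]
  calc ‖(A * Bᴴ).trace‖ = ‖A 0 1‖ * ‖B 0 1‖ := by rw [hAB, norm_mul, norm_star]
    _ ≤ ‖A 0 1‖ := mul_le_of_le_one_right (norm_nonneg _)
        ((B.norm_apply_le_l2_opNorm 0 1).trans hB_norm)
    _ = 2 * ‖P 1 0‖ := by simp [hP10]
    _ ≤ (P 1 1).re + (P 0 0).re := hAS.two_mul_norm_apply_le 1 0
    _ = S.trace.re - A.trace.re := by rw [← hP_trace, trace_fin_two, Complex.add_re, add_comm]

/-- The improved coefficient estimate in the 2×2 case: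
`|Tr(A Bᴴ)| ≤ Tr S − Re Tr A`. -/
theorem bohr_coefficient_estimate_two_by_two
    (A S B : Matrix (Fin 2) (Fin 2) ℂ)
    (hA_ut : ∀ i j : Fin 2, j < i → A i j = 0)
    (hS_herm : S.IsHermitian)
    (hS_ut : ∀ i j : Fin 2, j < i → S i j = 0)
    (hAS : (S - (2 : ℂ)⁻¹ • (A + Aᴴ)).PosSemidef)
    (hB_sut : ∀ i j : Fin 2, j ≤ i → B i j = 0)
    (hB_norm : ‖B‖ ≤ 1) :
    ‖(A * Bᴴ).trace‖ ≤ S.trace.re - A.trace.re :=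
  bohr_coefficient_estimate_two_by_two_general A S B hA_ut hS_ut hAS hB_sut hB_norm
end
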